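/- arXiv:2505.24112 — 4 statements merged into one kernel-verified Lean document; each statement's English description precedes it below -/
import Mathlib

section
/- The pseudogradient matrix 𝒬 of the N-player oligopoly has all eigenvalues with strictly positive real part; in particular 𝒬 is invertible. -/
/-!
Each row of `𝒬` has diagonal entry `2 R_∥ / (R_i R̄_i)`, while the off-diagonal entries of that row
have absolute values summing to `R_∥ / (R_i R̄_i)`, half of it. So `𝒬` is strictly diagonally
dominant with positive diagonal, and every Gershgorin disc lies in the open right half-plane.
-/

open Finset

namespace Matrix

variable {n : Type*} [Fintype n] [DecidableEq n]

theorem re_pos_of_mem_spectrum_of_sum_norm_lt_re_diag {A : Matrix n n ℂ}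
    (h : ∀ k, ∑ j ∈ univ.erase k, ‖A k j‖ < (A k k).re) {μ : ℂ} (hμ : μ ∈ spectrum ℂ A) :
    0 < μ.re := by
  have hev : Module.End.HasEigenvalue A.toLin' μ :=
    Module.End.hasEigenvalue_iff_mem_spectrum.mpr (by rwa [spectrum_toLin'])
  obtain ⟨k, hk⟩ := eigenvalue_mem_ball hev
  rw [Metric.mem_closedBall, dist_comm, Complex.dist_eq] at hk
  have hre : (A k k).re - μ.re ≤ ‖A k k - μ‖ := by
    simpa using Complex.re_le_norm (A k k - μ)
  linarith [h k]

theorem re_pos_of_mem_spectrum_map_ofReal_of_sum_abs_lt_diag {A : Matrix n n ℝ}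
    (h : ∀ k, ∑ j ∈ univ.erase k, |A k j| < A k k) {μ : ℂ}
    (hμ : μ ∈ spectrum ℂ (A.map Complex.ofReal)) : 0 < μ.re :=
  re_pos_of_mem_spectrum_of_sum_norm_lt_re_diag (fun k => by simpa using h k) hμ

end Matrix

theorem pos_of_inv_eq_sum_inv {ι : Type*} {s : Finset ι} (hs : s.Nonempty) {R : ι → ℝ}
    (hR : ∀ k ∈ s, 0 < R k) {x : ℝ} (hx : x⁻¹ = ∑ k ∈ s, (R k)⁻¹) : 0 < x :=
  inv_pos.mp (hx ▸ sum_pos (fun k hk => inv_pos.mpr (hR k hk)) hs)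

theorem sum_abs_neg_div_mul {ι : Type*} (s : Finset ι) {R : ι → ℝ} (hR : ∀ k, 0 < R k)
    {c : ℝ} (hc : 0 ≤ c) (i : ι) :
    ∑ j ∈ s, |-c / (R i * R j)| = c / R i * ∑ j ∈ s, (R j)⁻¹ := by
  rw [mul_sum]
  refine sum_congr rfl fun j _ => ?_
  rw [abs_div, abs_neg, abs_of_nonneg hc, abs_of_pos (mul_pos (hR i) (hR j))]
  ring

/-- the pseudogradient matrix `𝒬` of the oligopoly has all (complex)
eigenvalues with strictly positive real part; in particular it is invertible. -/
theorem stmt_5 (N : ℕ) (hN : 2 ≤ N) (R : Fin N → ℝ) (hR : ∀ k, 0 < R k)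
    (Rpar : ℝ) (hRpar : Rpar⁻¹ = ∑ k, (R k)⁻¹)
    (Rbar : Fin N → ℝ)
    (hRbar : ∀ i, (Rbar i)⁻¹ = ∑ k ∈ Finset.univ.erase i, (R k)⁻¹)
    (Q : Matrix (Fin N) (Fin N) ℝ)
    (hQ : ∀ i j, Q i j =
      if j = i then 2 * Rpar / (R i * Rbar i) else -Rpar / (R i * R j)) :
    (∀ μ ∈ spectrum ℂ (Q.map Complex.ofReal), 0 < μ.re) ∧ IsUnit Q.det := by
  have : Nontrivial (Fin N) := Fin.nontrivial_iff_two_le.mpr hN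
  have hRpar_pos : 0 < Rpar :=
    pos_of_inv_eq_sum_inv univ_nonempty (fun k _ => hR k) hRpar
  have hRbar_pos (i : Fin N) : 0 < Rbar i := by
    obtain ⟨j, hj⟩ := exists_ne i
    exact pos_of_inv_eq_sum_inv ⟨j, mem_erase.mpr ⟨hj, mem_univ j⟩⟩ (fun k _ => hR k) (hRbar i)
  have hdom (i : Fin N) : ∑ j ∈ univ.erase i, |Q i j| < Q i i := by
    have hrow : ∑ j ∈ univ.erase i, |Q i j| = Rpar / (R i * Rbar i) := by
      rw [sum_congr rfl fun j hj => by rw [hQ, if_neg (ne_of_mem_erase hj)],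
        sum_abs_neg_div_mul _ hR hRpar_pos.le, ← hRbar, div_mul_eq_div_div, div_eq_mul_inv]
      ring
    have : 0 < Rpar / (R i * Rbar i) := div_pos hRpar_pos (mul_pos (hR i) (hRbar_pos i))
    rw [hrow, hQ, if_pos rfl, mul_div_assoc]
    linarith
  exact ⟨fun _ => Matrix.re_pos_of_mem_spectrum_map_ofReal_of_sum_abs_lt_diag hdom,
    isUnit_iff_ne_zero.mpr
      (det_ne_zero_of_sum_row_lt_diag fun k => (hdom k).trans_le (le_abs_self _))⟩
end

section
/- Let 𝒬̄(δ) be the deception-perturbed pseudogradient matrix, with rows [𝒬̄(δ)]_{i:} = [𝒬]_{i:} + Σ_{k∈𝒦_i} δ_k [Q_i]_{k:}. If the deception vector δ satisfies |δ| < 1 (Euclidean norm), then for every diagonal gain matrix K = diag(k_1,...,k_N) with all k_i > 0, the matrix -K𝒬̄(δ) is Hurwitz (all eigenvalues have strictly negative real part). -/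
/-!
By Gershgorin's theorem, every eigenvalue of `-K 𝒬̄(δ)` lies in a disc centred at
`-k_i [𝒬̄(δ)]_{ii}` of radius `k_i ∑_{j ≠ i} |[𝒬̄(δ)]_{ij}|`, so it suffices that `𝒬̄(δ)` is
strictly row diagonally dominant with positive diagonal. The perturbation leaves the
off-diagonal entries `-R_∥/(R_i R_j)` of `𝒬` unchanged and lowers the diagonal entry by
`(R_∥/R_i) ∑_{k ∈ 𝒦_i} δ_k / R_k`; since `|δ_k| ≤ ‖δ‖ < 1`, this is strictly less than the
margin `(R_∥/R_i) ∑_{k ≠ i} 1/R_k` by which `𝒬` is dominant.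
-/

open Finset Matrix

theorem Matrix.re_lt_zero_of_mem_spectrum_of_re_add_sum_norm_lt_zero
    {n : Type*} [Fintype n] [DecidableEq n] {A : Matrix n n ℂ}
    (hA : ∀ i, (A i i).re + ∑ j ∈ univ.erase i, ‖A i j‖ < 0) {μ : ℂ}
    (hμ : μ ∈ spectrum ℂ A) : μ.re < 0 := by
  have heig : Module.End.HasEigenvalue A.toLin' μ :=
    Module.End.hasEigenvalue_iff_mem_spectrum.mpr (by rwa [spectrum_toLin'])
  obtain ⟨i, hi⟩ := eigenvalue_mem_ball heig
  rw [Metric.mem_closedBall, dist_eq_norm] at hi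
  have hre : μ.re - (A i i).re ≤ ‖μ - A i i‖ := by
    simpa using (le_abs_self _).trans (Complex.abs_re_le_norm (μ - A i i))
  linarith [hA i]

theorem Matrix.re_lt_zero_of_mem_spectrum_neg_diagonal_mul
    {n : Type*} [Fintype n] [DecidableEq n] {A : Matrix n n ℝ}
    (hA : ∀ i, ∑ j ∈ univ.erase i, |A i j| < A i i) {k : n → ℝ} (hk : ∀ i, 0 < k i)
    {μ : ℂ} (hμ : μ ∈ spectrum ℂ ((-(diagonal k * A)).map Complex.ofReal)) : μ.re < 0 := by
  refine re_lt_zero_of_mem_spectrum_of_re_add_sum_norm_lt_zero (fun i => ?_) hμ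
  simp only [map_apply, neg_apply, diagonal_mul, Complex.ofReal_neg, Complex.neg_re, Complex.ofReal_re,
    norm_neg, Complex.norm_real, Real.norm_eq_abs, abs_mul, abs_of_pos (hk i), ← mul_sum]
  nlinarith [mul_lt_mul_of_pos_left (hA i) (hk i)]

theorem Finset.sum_mul_lt_sum_of_subset_of_abs_lt_one {ι : Type*} {s t : Finset ι}
    {a w : ι → ℝ} (hst : s ⊆ t) (ht : t.Nonempty) (hw : ∀ k ∈ t, 0 < w k)
    (ha : ∀ k ∈ t, |a k| < 1) : ∑ k ∈ s, a k * w k < ∑ k ∈ t, w k :=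
  calc ∑ k ∈ s, a k * w k ≤ ∑ k ∈ s, |a k| * w k :=
        sum_le_sum fun k hk => mul_le_mul_of_nonneg_right (le_abs_self _) (hw k (hst hk)).le
    _ ≤ ∑ k ∈ t, |a k| * w k :=
        sum_le_sum_of_subset_of_nonneg hst fun k hk _ => mul_nonneg (abs_nonneg _) (hw k hk).le
    _ < ∑ k ∈ t, w k := sum_lt_sum_of_nonempty ht fun k hk => mul_lt_of_lt_one_left (hw k hk) (ha k hk)

section DeceptionPerturbedPseudogradient

variable {N : ℕ} {R : Fin N → ℝ} {Rpar : ℝ} {Rbar : Fin N → ℝ}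
  {Qmat : Fin N → Matrix (Fin N) (Fin N) ℝ} {Kd : Fin N → Finset (Fin N)} {δ : Fin N → ℝ}
  {Qbar : Matrix (Fin N) (Fin N) ℝ}

theorem qbar_apply_of_ne
    (hQmat : ∀ i j k, Qmat i j k =
      if j = i ∧ k = i then 2 * Rpar / (R i * Rbar i)
      else if j ≠ k ∧ (j = i ∨ k = i) then -Rpar / (R j * R k)
      else 0)
    (hKd : ∀ i, Kd i ⊆ univ.erase i)
    (hQbar : ∀ i j, Qbar i j = Qmat i i j + ∑ k ∈ Kd i, δ k * Qmat i k j)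
    {i j : Fin N} (hji : j ≠ i) : Qbar i j = -(Rpar / (R i * R j)) := by
  have hrow : ∀ k ∈ Kd i, δ k * Qmat i k j = 0 := fun k hk => by
    have hki := ne_of_mem_erase (hKd i hk)
    simp [hQmat, hki, hji]
  rw [hQbar, sum_eq_zero hrow, hQmat]
  simp [hji, Ne.symm hji, neg_div]

theorem qbar_apply_self
    (hQmat : ∀ i j k, Qmat i j k =
      if j = i ∧ k = i then 2 * Rpar / (R i * Rbar i)
      else if j ≠ k ∧ (j = i ∨ k = i) then -Rpar / (R j * R k)
      else 0)
    (hKd : ∀ i, Kd i ⊆ univ.erase i)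
    (hQbar : ∀ i j, Qbar i j = Qmat i i j + ∑ k ∈ Kd i, δ k * Qmat i k j) (i : Fin N) :
    Qbar i i = Rpar / R i * (2 * (Rbar i)⁻¹ - ∑ k ∈ Kd i, δ k * (R k)⁻¹) := by
  have hrow : ∀ k ∈ Kd i, δ k * Qmat i k i = -(Rpar / R i) * (δ k * (R k)⁻¹) := fun k hk => by
    have hki := ne_of_mem_erase (hKd i hk)
    simp only [hQmat, hki, false_and, if_false, ne_eq, not_false_eq_true, or_true, and_self,
      if_true]
    ring
  rw [hQbar, sum_congr rfl hrow, ← mul_sum, hQmat]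
  simp only [and_self, if_true]
  ring

end DeceptionPerturbedPseudogradient
theorem stmt_6_general (N : ℕ) (hN : 2 ≤ N) (R : Fin N → ℝ) (hR : ∀ k, 0 < R k)
    (Rpar : ℝ) (hRpar : Rpar⁻¹ = ∑ k, (R k)⁻¹)
    (Rbar : Fin N → ℝ)
    (hRbar : ∀ i, (Rbar i)⁻¹ = ∑ k ∈ Finset.univ.erase i, (R k)⁻¹)
    (Qmat : Fin N → Matrix (Fin N) (Fin N) ℝ)
    (hQmat : ∀ i j k, Qmat i j k =
      if j = i ∧ k = i then 2 * Rpar / (R i * Rbar i)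
      else if j ≠ k ∧ (j = i ∨ k = i) then -Rpar / (R j * R k)
      else 0)
    (Kd : Fin N → Finset (Fin N))
    (hKd : ∀ i, Kd i ⊆ Finset.univ.erase i)
    (δ : Fin N → ℝ)
    (hδ : Real.sqrt (∑ k, δ k ^ 2) < 1)
    (Qbar : Matrix (Fin N) (Fin N) ℝ)
    (hQbar : ∀ i j, Qbar i j = Qmat i i j + ∑ k ∈ Kd i, δ k * Qmat i k j)
    (kg : Fin N → ℝ) (hkg : ∀ i, 0 < kg i) :
    ∀ μ ∈ spectrum ℂ ((-(Matrix.diagonal kg * Qbar)).map Complex.ofReal), μ.re < 0 := by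
  have hRinv (k : Fin N) : 0 < (R k)⁻¹ := inv_pos.2 (hR k)
  have hRpar_pos : 0 < Rpar :=
    inv_pos.1 (hRpar ▸ sum_pos (fun k _ => hRinv k) ⟨⟨0, by omega⟩, mem_univ _⟩)
  have hδ_abs (k : Fin N) : |δ k| < 1 :=
    (Real.abs_le_sqrt (single_le_sum (fun j _ => sq_nonneg (δ j)) (mem_univ k))).trans_lt hδ
  intro μ hμ
  refine re_lt_zero_of_mem_spectrum_neg_diagonal_mul (fun i => ?_) hkg hμ
  have hothers : (univ.erase i).Nonempty :=
    (univ_nontrivial_iff.2 (Fin.nontrivial_iff_two_le.2 hN)).erase_nonempty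
  have hoff : ∑ j ∈ univ.erase i, |Qbar i j| = Rpar / R i * (Rbar i)⁻¹ := by
    rw [hRbar i, mul_sum]
    refine sum_congr rfl fun j hj => ?_
    rw [qbar_apply_of_ne hQmat hKd hQbar (ne_of_mem_erase hj), abs_neg,
      abs_of_pos (div_pos hRpar_pos (mul_pos (hR i) (hR j)))]
    ring
  have hshift : ∑ k ∈ Kd i, δ k * (R k)⁻¹ < (Rbar i)⁻¹ :=
    hRbar i ▸ sum_mul_lt_sum_of_subset_of_abs_lt_one (hKd i) hothers (fun k _ => hRinv k)
      (fun k _ => hδ_abs k)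
  rw [hoff, qbar_apply_self hQmat hKd hQbar]
  nlinarith [mul_lt_mul_of_pos_left hshift (div_pos hRpar_pos (hR i))]

/-- if the deception vector `δ` (supported on the set `D` of deceptive
players) has Euclidean norm `< 1`, then for every diagonal gain matrix
`K = diag(k_1,...,k_N)` with positive entries, `-K 𝒬̄(δ)` is Hurwitz, where
`[𝒬̄(δ)]_{i:} = [𝒬]_{i:} + ∑_{k ∈ 𝒦_i} δ_k [Q_i]_{k:}` and `𝒦_i` is the set of players
deceptive toward player `i`. -/
theorem stmt_6 (N : ℕ) (hN : 2 ≤ N) (R : Fin N → ℝ) (hR : ∀ k, 0 < R k)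
    (Rpar : ℝ) (hRpar : Rpar⁻¹ = ∑ k, (R k)⁻¹)
    (Rbar : Fin N → ℝ)
    (hRbar : ∀ i, (Rbar i)⁻¹ = ∑ k ∈ Finset.univ.erase i, (R k)⁻¹)
    (Qmat : Fin N → Matrix (Fin N) (Fin N) ℝ)
    (hQmat : ∀ i j k, Qmat i j k =
      if j = i ∧ k = i then 2 * Rpar / (R i * Rbar i)
      else if j ≠ k ∧ (j = i ∨ k = i) then -Rpar / (R j * R k)
      else 0)
    (D : Finset (Fin N)) (Kd : Fin N → Finset (Fin N))
    (hKd : ∀ i, Kd i ⊆ Finset.univ.erase i)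
    (hKdD : ∀ i k, k ∈ Kd i → k ∈ D)
    (δ : Fin N → ℝ) (hδsupp : ∀ k, k ∉ D → δ k = 0)
    (hδ : Real.sqrt (∑ k, δ k ^ 2) < 1)
    (Qbar : Matrix (Fin N) (Fin N) ℝ)
    (hQbar : ∀ i j, Qbar i j = Qmat i i j + ∑ k ∈ Kd i, δ k * Qmat i k j)
    (kg : Fin N → ℝ) (hkg : ∀ i, 0 < kg i) :
    ∀ μ ∈ spectrum ℂ ((-(Matrix.diagonal kg * Qbar)).map Complex.ofReal), μ.re < 0 :=
  stmt_6_general N hN R hR Rpar hRpar Rbar hRbar Qmat hQmat Kd hKd δ hδ Qbar hQbar kg hkg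
end

section
/- If 0 < |δ| < 2 and 𝒬̄(δ) is invertible, then the point u* = -𝒬̄(δ)^{-1} 𝒬̄ℬ(δ) is a Nash equilibrium of the deceptive game {J̃_i}: each J̃_i is quadratic in x_i with ∇_i J̃_i(u*) = 0 and second derivative ∂²J̃_i/∂x_i² = [𝒬̄(δ)]_{ii} > 0, so x_i ↦ J̃_i(x_i, u*_{-i}) is minimized at u*_i. -/
/-!
Along its own coordinate each deceptive cost `J̃_i` is an exact quadratic:
`J̃_i(x with x_i := t) - J̃_i(x) = (t - x_i) [𝒬̄(δ) x + ℬ̄(δ)]_i + ½ [𝒬̄(δ)]_{ii} (t - x_i)²`,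
the linear coefficient being the pseudogradient. At `u* = -𝒬̄(δ)⁻¹ ℬ̄(δ)` the pseudogradient
vanishes, so `u*_i` minimizes `J̃_i(·, u*_{-i})` as soon as `[𝒬̄(δ)]_{ii} > 0`. Writing
`[𝒬̄(δ)]_{ii} = (R_∥ / R_i) (2 / R̄_i - ∑_{k ∈ 𝒦_i} δ_k / R_k)`, positivity follows from
`δ_k ≤ |δ| < 2` and `𝒦_i ⊆ {k ≠ i}`, which give
`∑_{k ∈ 𝒦_i} δ_k / R_k < 2 ∑_{k ≠ i} 1 / R_k = 2 / R̄_i`.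
-/

open Finset Matrix Function

namespace DeceptiveOligopoly

variable {ι : Type*}

lemma le_sqrt_sum_sq [Fintype ι] (δ : ι → ℝ) (k : ι) : δ k ≤ √(∑ j, δ j ^ 2) :=
  (le_abs_self _).trans <| Real.abs_le_sqrt <|
    single_le_sum (fun j _ => sq_nonneg (δ j)) (mem_univ k)

lemma sum_mul_lt_mul_sum_of_subset {K S : Finset ι} (hKS : K ⊆ S) {δ w : ι → ℝ}
    (hw : ∀ k ∈ S, 0 ≤ w k) (hS : 0 < ∑ k ∈ S, w k) {c a : ℝ} (hc : 0 ≤ c)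
    (hδ : ∀ k ∈ K, δ k ≤ c) (hca : c < a) :
    ∑ k ∈ K, δ k * w k < a * ∑ k ∈ S, w k :=
  calc ∑ k ∈ K, δ k * w k
      ≤ ∑ k ∈ K, c * w k :=
        sum_le_sum fun k hk => mul_le_mul_of_nonneg_right (hδ k hk) (hw k (hKS hk))
    _ = c * ∑ k ∈ K, w k := (mul_sum _ _ _).symm
    _ ≤ c * ∑ k ∈ S, w k :=
        mul_le_mul_of_nonneg_left (sum_le_sum_of_subset_of_nonneg hKS fun k hk _ => hw k hk) hc
    _ < a * ∑ k ∈ S, w k := mul_lt_mul_of_pos_right hca hS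

lemma pos_of_inv_eq_sum_inv [Fintype ι] [Nonempty ι] {R : ι → ℝ} (hR : ∀ k, 0 < R k)
    {Rpar : ℝ} (hRpar : Rpar⁻¹ = ∑ k, (R k)⁻¹) : 0 < Rpar := by
  rw [← inv_pos, hRpar]
  exact sum_pos (fun k _ => inv_pos.2 (hR k)) univ_nonempty

lemma sum_erase_inv_pos [Fintype ι] [DecidableEq ι] [Nontrivial ι] {R : ι → ℝ}
    (hR : ∀ k, 0 < R k) (i : ι) : 0 < ∑ k ∈ univ.erase i, (R k)⁻¹ := by
  obtain ⟨j, hj⟩ := exists_ne i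
  exact sum_pos (fun k _ => inv_pos.2 (hR k)) ⟨j, mem_erase.2 ⟨hj, mem_univ j⟩⟩

lemma mulVec_neg_nonsing_inv_mulVec_add_self [Fintype ι] [DecidableEq ι] {R : Type*}
    [CommRing R] (A : Matrix ι ι R) (hA : IsUnit A.det) (b : ι → R) :
    A *ᵥ -(A⁻¹ *ᵥ b) + b = 0 := by
  rw [mulVec_neg, mulVec_mulVec, mul_nonsing_inv _ hA, one_mulVec, neg_add_cancel]

noncomputable section

variable (Rpar Sd : ℝ) (R Rbar m δ : ι → ℝ) (K : ι → Finset ι)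

def deceptionWeight (i : ι) : ℝ := ∑ k ∈ K i, δ k / R k

def deceptiveOffset (i : ι) : ℝ :=
  (-(m i) * Rpar / (R i * Rbar i) - Sd * Rpar / R i)
    + ∑ k ∈ K i, δ k * (m i * Rpar / (R i * R k))

lemma deceptiveOffset_eq (i : ι) :
    deceptiveOffset Rpar Sd R Rbar m δ K i
      = (-(m i) * Rpar / (R i * Rbar i) - Sd * Rpar / R i)
        + m i * Rpar / R i * deceptionWeight R δ K i := by
  rw [deceptiveOffset, deceptionWeight, mul_sum]
  exact congrArg _ (sum_congr rfl fun k _ => by ring)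

lemma sum_deception_eq (i : ι) (y : ℝ) :
    ∑ k ∈ K i, δ k * (-(Rpar / (2 * R i * R k)) * y * (y - 2 * m i))
      = -(Rpar / (2 * R i)) * y * (y - 2 * m i) * deceptionWeight R δ K i := by
  rw [deceptionWeight, mul_sum]
  exact sum_congr rfl fun k _ => by ring

variable [DecidableEq ι]

def cost [Fintype ι] (i : ι) (x : ι → ℝ) : ℝ :=
  -((Rpar / R i) * (Sd - x i / Rbar i + ∑ j ∈ univ.erase i, x j / R j)) * (x i - m i)

def deceptiveCost [Fintype ι] (σ : ι → (ι → ℝ) → ℝ) (i : ι) (x : ι → ℝ) : ℝ :=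
  cost Rpar Sd R Rbar m i x + σ i x
    + ∑ k ∈ K i, δ k * (-(Rpar / (2 * R i * R k)) * x i * (x i - 2 * m i))

def deceptiveMatrix : Matrix ι ι ℝ :=
  Matrix.of fun i j => (if j = i then 2 * Rpar / (R i * Rbar i) else -Rpar / (R i * R j))
    + ∑ k ∈ K i, δ k * (if j = i then -Rpar / (R i * R k) else 0)

lemma deceptiveMatrix_apply_self (i : ι) :
    deceptiveMatrix Rpar R Rbar δ K i i
      = 2 * Rpar / (R i * Rbar i) + -(Rpar / R i) * deceptionWeight R δ K i := by
  simp only [deceptiveMatrix, deceptionWeight, of_apply, if_true]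
  rw [mul_sum]
  exact congrArg _ (sum_congr rfl fun k _ => by ring)

lemma deceptiveMatrix_apply_of_ne {i j : ι} (h : j ≠ i) :
    deceptiveMatrix Rpar R Rbar δ K i j = -Rpar / (R i * R j) := by
  simp [deceptiveMatrix, h]

lemma deceptiveMatrix_mulVec_apply [Fintype ι] (x : ι → ℝ) (i : ι) :
    (deceptiveMatrix Rpar R Rbar δ K *ᵥ x) i
      = deceptiveMatrix Rpar R Rbar δ K i i * x i
        + -(Rpar / R i) * ∑ j ∈ univ.erase i, x j / R j := by
  rw [mulVec, dotProduct, ← add_sum_erase _ _ (mem_univ i), mul_sum]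
  refine congrArg _ (sum_congr rfl fun j hj => ?_)
  rw [deceptiveMatrix_apply_of_ne _ _ _ _ _ (ne_of_mem_erase hj)]
  ring

lemma deceptiveCost_update_sub [Fintype ι] {σ : ι → (ι → ℝ) → ℝ} {i : ι}
    (hσ : ∀ x y, (∀ j, j ≠ i → x j = y j) → σ i x = σ i y) (x : ι → ℝ) (t : ℝ) :
    deceptiveCost Rpar Sd R Rbar m δ K σ i (update x i t)
        - deceptiveCost Rpar Sd R Rbar m δ K σ i x
      = (t - x i) * (deceptiveMatrix Rpar R Rbar δ K *ᵥ x + deceptiveOffset Rpar Sd R Rbar m δ K) i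
        + deceptiveMatrix Rpar R Rbar δ K i i / 2 * (t - x i) ^ 2 := by
  have hσx : σ i (update x i t) = σ i x := hσ _ _ fun j hj => update_of_ne hj _ _
  have hothers : ∑ j ∈ univ.erase i, update x i t j / R j = ∑ j ∈ univ.erase i, x j / R j :=
    sum_congr rfl fun j hj => by rw [update_of_ne (ne_of_mem_erase hj)]
  simp only [deceptiveCost, cost, sum_deception_eq, hσx, hothers, update_self, Pi.add_apply,
    deceptiveMatrix_mulVec_apply, deceptiveMatrix_apply_self, deceptiveOffset_eq]
  ring

lemma deceptiveCost_le_update [Fintype ι] {σ : ι → (ι → ℝ) → ℝ} {i : ι}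
    (hσ : ∀ x y, (∀ j, j ≠ i → x j = y j) → σ i x = σ i y) {x : ι → ℝ}
    (hx : (deceptiveMatrix Rpar R Rbar δ K *ᵥ x + deceptiveOffset Rpar Sd R Rbar m δ K) i = 0)
    (hdiag : 0 ≤ deceptiveMatrix Rpar R Rbar δ K i i) (t : ℝ) :
    deceptiveCost Rpar Sd R Rbar m δ K σ i x
      ≤ deceptiveCost Rpar Sd R Rbar m δ K σ i (update x i t) := by
  have hexpand := deceptiveCost_update_sub Rpar Sd R Rbar m δ K hσ x t
  rw [hx, mul_zero, zero_add] at hexpand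
  linarith [mul_nonneg (div_nonneg hdiag zero_le_two) (sq_nonneg (t - x i))]

lemma deceptiveMatrix_apply_self_pos [Fintype ι] [Nontrivial ι] (hR : ∀ k, 0 < R k)
    (hRpar : Rpar⁻¹ = ∑ k, (R k)⁻¹) (hRbar : ∀ i, (Rbar i)⁻¹ = ∑ k ∈ univ.erase i, (R k)⁻¹)
    (hK : ∀ i, K i ⊆ univ.erase i) (hδ : √(∑ k, δ k ^ 2) < 2) (i : ι) :
    0 < deceptiveMatrix Rpar R Rbar δ K i i := by
  have hweight : deceptionWeight R δ K i < 2 * (Rbar i)⁻¹ := by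
    rw [hRbar, deceptionWeight]
    simp only [div_eq_mul_inv]
    exact sum_mul_lt_mul_sum_of_subset (hK i) (fun k _ => (inv_pos.2 (hR k)).le)
      (sum_erase_inv_pos hR i) (Real.sqrt_nonneg _) (fun k _ => le_sqrt_sum_sq δ k) hδ
  have hRpar_pos := pos_of_inv_eq_sum_inv hR hRpar
  have hsplit : 2 * Rpar / (R i * Rbar i) = Rpar / R i * (2 * (Rbar i)⁻¹) := by ring
  rw [deceptiveMatrix_apply_self, hsplit, neg_mul, ← sub_eq_add_neg, ← mul_sub]
  exact mul_pos (div_pos hRpar_pos (hR i)) (sub_pos.2 hweight)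

end

end DeceptiveOligopoly

open DeceptiveOligopoly

theorem stmt_9_general (N : ℕ) (hN : 2 ≤ N) (R : Fin N → ℝ) (hR : ∀ k, 0 < R k)
    (Rpar : ℝ) (hRpar : Rpar⁻¹ = ∑ k, (R k)⁻¹)
    (Rbar : Fin N → ℝ)
    (hRbar : ∀ i, (Rbar i)⁻¹ = ∑ k ∈ Finset.univ.erase i, (R k)⁻¹)
    (Sd : ℝ) (m : Fin N → ℝ)
    (J : Fin N → (Fin N → ℝ) → ℝ)
    (hJ : ∀ i x, J i x =
      -((Rpar / R i) * (Sd - x i / Rbar i + ∑ j ∈ Finset.univ.erase i, x j / R j))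
        * (x i - m i))
    (Kd : Fin N → Finset (Fin N))
    (hKd : ∀ i, Kd i ⊆ Finset.univ.erase i)
    (δ : Fin N → ℝ)
    (hδlt : Real.sqrt (∑ k, δ k ^ 2) < 2)
    -- deceptive costs: `J̃_i(x) = J_i(x) + σ_i(x_{-i}) + ∑_{k∈𝒦_i} δ_k ∫_0^{x_i} ∇_k J_i`
    (σ : Fin N → (Fin N → ℝ) → ℝ)
    (hσ : ∀ i x y, (∀ j, j ≠ i → x j = y j) → σ i x = σ i y)
    (Jt : Fin N → (Fin N → ℝ) → ℝ)
    (hJt : ∀ i x, Jt i x = J i x + σ i x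
      + ∑ k ∈ Kd i, δ k * (-(Rpar / (2 * R i * R k)) * x i * (x i - 2 * m i)))
    -- perturbed pseudogradient
    (Qbar : Matrix (Fin N) (Fin N) ℝ)
    (hQbar : ∀ i j, Qbar i j =
      (if j = i then 2 * Rpar / (R i * Rbar i) else -Rpar / (R i * R j))
        + ∑ k ∈ Kd i, δ k * (if j = i then -Rpar / (R i * R k) else 0))
    (Bbar : Fin N → ℝ)
    (hBbar : ∀ i, Bbar i = (-(m i) * Rpar / (R i * Rbar i) - Sd * Rpar / R i)
      + ∑ k ∈ Kd i, δ k * (m i * Rpar / (R i * R k)))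
    (hinv : IsUnit Qbar.det) :
    (∀ i, 0 < Qbar i i) ∧
    (∀ i t, Jt i (-(Qbar⁻¹.mulVec Bbar))
      ≤ Jt i (Function.update (-(Qbar⁻¹.mulVec Bbar)) i t)) := by
  obtain rfl : J = cost Rpar Sd R Rbar m := funext fun i => funext (hJ i)
  obtain rfl : Jt = deceptiveCost Rpar Sd R Rbar m δ Kd σ := funext fun i => funext (hJt i)
  obtain rfl : Qbar = deceptiveMatrix Rpar R Rbar δ Kd := Matrix.ext hQbar
  obtain rfl : Bbar = deceptiveOffset Rpar Sd R Rbar m δ Kd := funext hBbar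
  have := Fin.nontrivial_iff_two_le.2 hN
  have hdiag := deceptiveMatrix_apply_self_pos Rpar R Rbar δ Kd hR hRpar hRbar hKd hδlt
  refine ⟨hdiag, fun i t => deceptiveCost_le_update Rpar Sd R Rbar m δ Kd (hσ i) ?_ (hdiag i).le t⟩
  exact congrFun (mulVec_neg_nonsing_inv_mulVec_add_self _ hinv _) i

/-- if `0 < |δ| < 2` and `𝒬̄(δ)` is invertible, then
`u* = -𝒬̄(δ)⁻¹ ℬ̄(δ)` is a Nash equilibrium of the deceptive game `{J̃_i}`: each
diagonal entry `[𝒬̄(δ)]_{ii}` is positive and `x_i ↦ J̃_i(x_i, u*_{-i})` is minimized at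
`u*_i`. -/
theorem stmt_9 (N : ℕ) (hN : 2 ≤ N) (R : Fin N → ℝ) (hR : ∀ k, 0 < R k)
    (Rpar : ℝ) (hRpar : Rpar⁻¹ = ∑ k, (R k)⁻¹)
    (Rbar : Fin N → ℝ)
    (hRbar : ∀ i, (Rbar i)⁻¹ = ∑ k ∈ Finset.univ.erase i, (R k)⁻¹)
    (Sd : ℝ) (m : Fin N → ℝ)
    (J : Fin N → (Fin N → ℝ) → ℝ)
    (hJ : ∀ i x, J i x =
      -((Rpar / R i) * (Sd - x i / Rbar i + ∑ j ∈ Finset.univ.erase i, x j / R j))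
        * (x i - m i))
    (D : Finset (Fin N)) (Kd : Fin N → Finset (Fin N))
    (hKd : ∀ i, Kd i ⊆ Finset.univ.erase i)
    (hKdD : ∀ i k, k ∈ Kd i → k ∈ D)
    (δ : Fin N → ℝ) (hδsupp : ∀ k, k ∉ D → δ k = 0)
    (hδpos : 0 < Real.sqrt (∑ k, δ k ^ 2))
    (hδlt : Real.sqrt (∑ k, δ k ^ 2) < 2)
    -- deceptive costs: `J̃_i(x) = J_i(x) + σ_i(x_{-i}) + ∑_{k∈𝒦_i} δ_k ∫_0^{x_i} ∇_k J_i`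
    (σ : Fin N → (Fin N → ℝ) → ℝ)
    (hσ : ∀ i x y, (∀ j, j ≠ i → x j = y j) → σ i x = σ i y)
    (Jt : Fin N → (Fin N → ℝ) → ℝ)
    (hJt : ∀ i x, Jt i x = J i x + σ i x
      + ∑ k ∈ Kd i, δ k * (-(Rpar / (2 * R i * R k)) * x i * (x i - 2 * m i)))
    -- perturbed pseudogradient
    (Qbar : Matrix (Fin N) (Fin N) ℝ)
    (hQbar : ∀ i j, Qbar i j =
      (if j = i then 2 * Rpar / (R i * Rbar i) else -Rpar / (R i * R j))
        + ∑ k ∈ Kd i, δ k * (if j = i then -Rpar / (R i * R k) else 0))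
    (Bbar : Fin N → ℝ)
    (hBbar : ∀ i, Bbar i = (-(m i) * Rpar / (R i * Rbar i) - Sd * Rpar / R i)
      + ∑ k ∈ Kd i, δ k * (m i * Rpar / (R i * R k)))
    (hinv : IsUnit Qbar.det) :
    (∀ i, 0 < Qbar i i) ∧
    (∀ i t, Jt i (-(Qbar⁻¹.mulVec Bbar))
      ≤ Jt i (Function.update (-(Qbar⁻¹.mulVec Bbar)) i t)) :=
  stmt_9_general N hN R hR Rpar hRpar Rbar hRbar Sd m J hJ Kd hKd δ hδlt σ hσ Jt hJt Qbar hQbar Bbar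
    hBbar hinv
end

section
/- With σ_i(x_{-i}) := -(R_∥ m_i² / (2R_i)) Σ_{k∈𝒦_i} δ_k/R_k, the deceptive cost satisfies the factorization J̃_i(x) = -( s_i(x) + (x_i - m_i)(R_∥/(2R_i)) Σ_{k∈𝒦_i} δ_k/R_k )(x_i - m_i); i.e. deception is equivalent to an inflated/deflated sales function. -/
/-! The deception term is `-c x_i (x_i - 2 m_i)` with `c = (R∥ / (2 R_i)) ∑_{k ∈ 𝒦_i} δ_k / R_k`,
and `σ_i = -c m_i²` completes it to the square `-c (x_i - m_i)²`, which merges with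
`J_i = -s_i (x_i - m_i)` into a single factor `x_i - m_i`. -/

theorem Finset.sum_mul_neg_div_mul_eq {ι 𝕜 : Type*} [Field 𝕜] (K : Finset ι) (δ R : ι → 𝕜)
    (a b y : 𝕜) :
    ∑ k ∈ K, δ k * (-(a / (b * R k)) * y) = -(a / b) * y * ∑ k ∈ K, δ k / R k := by
  rw [Finset.mul_sum]
  refine Finset.sum_congr rfl fun k _ => ?_
  ring

theorem stmt_11_general (N : ℕ) (R : Fin N → ℝ)
    (Rpar : ℝ) (m : Fin N → ℝ)
    (s : Fin N → (Fin N → ℝ) → ℝ)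
    (J : Fin N → (Fin N → ℝ) → ℝ)
    (hJ : ∀ i x, J i x = -(s i x) * (x i - m i))
    (Kd : Fin N → Finset (Fin N))
    (δ : Fin N → ℝ)
    (σ : Fin N → ℝ)
    (hσ : ∀ i, σ i = -(Rpar * m i ^ 2 / (2 * R i)) * ∑ k ∈ Kd i, δ k / R k)
    (Jt : Fin N → (Fin N → ℝ) → ℝ)
    (hJt : ∀ i x, Jt i x = J i x + σ i
      + ∑ k ∈ Kd i, δ k * (-(Rpar / (2 * R i * R k)) * x i * (x i - 2 * m i))) :
    ∀ i x, Jt i x =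
      -(s i x + (x i - m i) * (Rpar / (2 * R i)) * ∑ k ∈ Kd i, δ k / R k)
        * (x i - m i) := by
  intro i x
  simp only [hJt, hJ, hσ, mul_assoc _ (x i), Finset.sum_mul_neg_div_mul_eq]
  ring

/-- with `σ_i(x_{-i}) := -(R∥ m_i²/(2R_i)) ∑_{k∈𝒦_i} δ_k/R_k`, the
deceptive cost factorizes as
`J̃_i(x) = -( s_i(x) + (x_i - m_i)(R∥/(2R_i)) ∑_{k∈𝒦_i} δ_k/R_k )(x_i - m_i)`,
i.e. deception is equivalent to an inflated/deflated sales function. -/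
theorem stmt_11 (N : ℕ) (hN : 2 ≤ N) (R : Fin N → ℝ) (hR : ∀ k, 0 < R k)
    (Rpar : ℝ) (hRpar : Rpar⁻¹ = ∑ k, (R k)⁻¹)
    (Rbar : Fin N → ℝ)
    (hRbar : ∀ i, (Rbar i)⁻¹ = ∑ k ∈ Finset.univ.erase i, (R k)⁻¹)
    (Sd : ℝ) (m : Fin N → ℝ)
    (s : Fin N → (Fin N → ℝ) → ℝ)
    (hs : ∀ i x, s i x =
      (Rpar / R i) * (Sd - x i / Rbar i + ∑ j ∈ Finset.univ.erase i, x j / R j))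
    (J : Fin N → (Fin N → ℝ) → ℝ)
    (hJ : ∀ i x, J i x = -(s i x) * (x i - m i))
    (Kd : Fin N → Finset (Fin N)) (hKd : ∀ i, Kd i ⊆ Finset.univ.erase i)
    (δ : Fin N → ℝ)
    (σ : Fin N → ℝ)
    (hσ : ∀ i, σ i = -(Rpar * m i ^ 2 / (2 * R i)) * ∑ k ∈ Kd i, δ k / R k)
    (Jt : Fin N → (Fin N → ℝ) → ℝ)
    (hJt : ∀ i x, Jt i x = J i x + σ i
      + ∑ k ∈ Kd i, δ k * (-(Rpar / (2 * R i * R k)) * x i * (x i - 2 * m i))) :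
    ∀ i x, Jt i x =
      -(s i x + (x i - m i) * (Rpar / (2 * R i)) * ∑ k ∈ Kd i, δ k / R k)
        * (x i - m i) :=
  stmt_11_general N R Rpar m s J hJ Kd δ σ hσ Jt hJt
end
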